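/- Let τ lie in the complex upper half-plane and let Δ₁, Δ₂, Δ₃ ∈ ℂ satisfy Δ₁ + Δ₂ + Δ₃ ∈ ℤ. Set (u₁, u₂, u₃) = (0, 1/2, τ/2), and assume θ₁(u_i − u_j + Δ_a;τ) ≠ 0 for all i, j ∈ {1,2,3} and a ∈ {1,2,3}. Then for each i ∈ {1,2,3}: ∏_{j=1}^{3} ∏_{a=1}^{3} θ₁(u_j − u_i + Δ_a;τ) / θ₁(u_i − u_j + Δ_a;τ) = 1. (Hence the configuration with holonomy differences (u₂−u₁, u₃−u₁) = (1/2, τ/2) is an exact solution of the SU(3) elliptic Bethe Ansatz equations 1 = e^{2πiλ}∏_{j,a} θ₁(u_j−u_i+Δ_a;τ)/θ₁(u_i−u_j+Δ_a;τ), with λ = 0, for every choice of the chemical potentials.) -/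
import Mathlib


noncomputable def θ₁ (u τ : ℂ) : ℂ :=
  -Complex.I * Complex.exp (Real.pi * Complex.I * τ / 4 + Real.pi * Complex.I * u) *
    jacobiTheta₂ (u + (1 + τ) / 2) τ

noncomputable def θ₂ (u τ : ℂ) : ℂ :=
  Complex.exp (Real.pi * Complex.I * τ / 4 + Real.pi * Complex.I * u) *
    jacobiTheta₂ (u + τ / 2) τ

noncomputable def θ₃ (u τ : ℂ) : ℂ := jacobiTheta₂ u τ

noncomputable def θ₄ (u τ : ℂ) : ℂ := jacobiTheta₂ (u + 1 / 2) τ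

noncomputable def θ₁' (u τ : ℂ) : ℂ := deriv (fun v => θ₁ v τ) u

noncomputable def θ₂' (u τ : ℂ) : ℂ := deriv (fun v => θ₂ v τ) u

noncomputable def θ₃' (u τ : ℂ) : ℂ := deriv (fun v => θ₃ v τ) u

noncomputable def θ₄' (u τ : ℂ) : ℂ := deriv (fun v => θ₄ v τ) u

lemma theta1_add_one (u τ : ℂ) : θ₁ (u + 1) τ = -θ₁ u τ := by
  unfold θ₁
  rw [show u + 1 + (1 + τ) / 2 = (u + (1 + τ) / 2) + 1 by ring, jacobiTheta₂_add_left]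
  have key : Complex.exp (Real.pi * Complex.I * τ / 4 + Real.pi * Complex.I * (u + 1)) =
      -Complex.exp (Real.pi * Complex.I * τ / 4 + Real.pi * Complex.I * u) := by
    rw [show (Real.pi : ℂ) * Complex.I * τ / 4 + Real.pi * Complex.I * (u + 1)
        = (Real.pi * Complex.I * τ / 4 + Real.pi * Complex.I * u) + Real.pi * Complex.I by
        ring, Complex.exp_add, Complex.exp_pi_mul_I]
    ring
  rw [key]; ring

lemma theta1_add_tau (u τ : ℂ) :
    θ₁ (u + τ) τ =
      -Complex.exp (-(Real.pi * Complex.I * τ) - 2 * Real.pi * Complex.I * u) * θ₁ u τ := by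
  unfold θ₁
  rw [show u + τ + (1 + τ) / 2 = (u + (1 + τ) / 2) + τ by ring, jacobiTheta₂_add_left']
  have key : Complex.exp (Real.pi * Complex.I * τ / 4 + Real.pi * Complex.I * (u + τ)) *
      Complex.exp (-Real.pi * Complex.I * (τ + 2 * (u + (1 + τ) / 2))) =
      -(Complex.exp (-(Real.pi * Complex.I * τ) - 2 * Real.pi * Complex.I * u) *
        Complex.exp (Real.pi * Complex.I * τ / 4 + Real.pi * Complex.I * u)) := by
    rw [← Complex.exp_add, ← Complex.exp_add,
      show -((Real.pi : ℂ) * Complex.I * τ) - 2 * Real.pi * Complex.I * u +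
          (Real.pi * Complex.I * τ / 4 + Real.pi * Complex.I * u)
        = ((Real.pi : ℂ) * Complex.I * τ / 4 + Real.pi * Complex.I * (u + τ) +
          (-Real.pi * Complex.I * (τ + 2 * (u + (1 + τ) / 2)))) + Real.pi * Complex.I by
        ring]
    conv_rhs => rw [Complex.exp_add, Complex.exp_pi_mul_I]
    ring
  calc -Complex.I * Complex.exp (Real.pi * Complex.I * τ / 4 + Real.pi * Complex.I * (u + τ)) *
        (Complex.exp (-Real.pi * Complex.I * (τ + 2 * (u + (1 + τ) / 2))) *
          jacobiTheta₂ (u + (1 + τ) / 2) τ)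
      = -Complex.I * (Complex.exp (Real.pi * Complex.I * τ / 4 + Real.pi * Complex.I * (u + τ)) *
          Complex.exp (-Real.pi * Complex.I * (τ + 2 * (u + (1 + τ) / 2)))) *
          jacobiTheta₂ (u + (1 + τ) / 2) τ := by ring
    _ = _ := by rw [key]; ring

lemma rev_rel (x y a : ℂ) (h : x = -Complex.exp a * y) : y = -Complex.exp (-a) * x := by
  rw [h, ← mul_assoc, neg_mul_neg, ← Complex.exp_add, neg_add_cancel, Complex.exp_zero, one_mul]

lemma prod_ratio (Δ : Fin 3 → ℂ) (n : ℤ) (hn : Δ 0 + Δ 1 + Δ 2 = (n : ℂ)) (s : ℤ)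
    (f g : Fin 3 → ℂ)
    (hrel : ∀ a, f a = -Complex.exp ((s : ℂ) * (2 * Real.pi * Complex.I) * Δ a) * g a)
    (hg : ∀ a, g a ≠ 0) :
    (∏ a : Fin 3, f a / g a) = -1 := by
  have hd : ∀ a, f a / g a = -Complex.exp ((s : ℂ) * (2 * Real.pi * Complex.I) * Δ a) := by
    intro a
    rw [hrel a, neg_mul, neg_div, mul_div_assoc, div_self (hg a), mul_one]
  rw [Fin.prod_univ_three, hd 0, hd 1, hd 2]
  have : Complex.exp ((s : ℂ) * (2 * Real.pi * Complex.I) * Δ 0) *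
      Complex.exp ((s : ℂ) * (2 * Real.pi * Complex.I) * Δ 1) *
      Complex.exp ((s : ℂ) * (2 * Real.pi * Complex.I) * Δ 2) = 1 := by
    rw [← Complex.exp_add, ← Complex.exp_add,
      show (s : ℂ) * (2 * Real.pi * Complex.I) * Δ 0 +
          (s : ℂ) * (2 * Real.pi * Complex.I) * Δ 1 +
          (s : ℂ) * (2 * Real.pi * Complex.I) * Δ 2
        = (s : ℂ) * (2 * Real.pi * Complex.I) * (Δ 0 + Δ 1 + Δ 2) by ring, hn,
      show (s : ℂ) * (2 * Real.pi * Complex.I) * (n : ℂ)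
        = ((s * n : ℤ) : ℂ) * (2 * Real.pi * Complex.I) by push_cast; ring,
      Complex.exp_int_mul_two_pi_mul_I]
  calc -Complex.exp ((s : ℂ) * (2 * Real.pi * Complex.I) * Δ 0) *
        -Complex.exp ((s : ℂ) * (2 * Real.pi * Complex.I) * Δ 1) *
        -Complex.exp ((s : ℂ) * (2 * Real.pi * Complex.I) * Δ 2)
      = -(Complex.exp ((s : ℂ) * (2 * Real.pi * Complex.I) * Δ 0) *
          Complex.exp ((s : ℂ) * (2 * Real.pi * Complex.I) * Δ 1) *
          Complex.exp ((s : ℂ) * (2 * Real.pi * Complex.I) * Δ 2)) := by ring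
    _ = -1 := by rw [this]

theorem exact_nonstandard_SU3_solution (τ : ℂ) (hτ : 0 < τ.im) (Δ : Fin 3 → ℂ)
    (hΔ : ∃ n : ℤ, Δ 0 + Δ 1 + Δ 2 = (n : ℂ))
    (u : Fin 3 → ℂ) (hu : u = ![0, 1 / 2, τ / 2])
    (hne : ∀ i j a : Fin 3, θ₁ (u i - u j + Δ a) τ ≠ 0) :
    ∀ i : Fin 3,
      ∏ j : Fin 3, ∏ a : Fin 3,
        θ₁ (u j - u i + Δ a) τ / θ₁ (u i - u j + Δ a) τ = 1 := by
  obtain ⟨n, hn⟩ := hΔ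
  subst hu
  -- values
  have hv0 : (![0, 1 / 2, τ / 2] : Fin 3 → ℂ) 0 = 0 := rfl
  have hv1 : (![0, 1 / 2, τ / 2] : Fin 3 → ℂ) 1 = 1 / 2 := rfl
  have hv2 : (![0, 1 / 2, τ / 2] : Fin 3 → ℂ) 2 = τ / 2 := rfl
  -- nonvanishing, specialized
  have hg : ∀ i j a : Fin 3, θ₁ ((![0, 1 / 2, τ / 2] : Fin 3 → ℂ) i -
      (![0, 1 / 2, τ / 2] : Fin 3 → ℂ) j + Δ a) τ ≠ 0 := hne
  -- the six quasiperiodicity relations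
  -- pair (1/2, 0): arguments (1/2 - 0 + Δ) and (0 - 1/2 + Δ)
  have h10 : ∀ a : Fin 3, θ₁ ((1 : ℂ) / 2 - 0 + Δ a) τ =
      -Complex.exp (((0 : ℤ) : ℂ) * (2 * Real.pi * Complex.I) * Δ a) *
        θ₁ ((0 : ℂ) - 1 / 2 + Δ a) τ := by
    intro a
    rw [show (1 : ℂ) / 2 - 0 + Δ a = ((0 : ℂ) - 1 / 2 + Δ a) + 1 by ring, theta1_add_one]
    norm_num
  have h01 : ∀ a : Fin 3, θ₁ ((0 : ℂ) - 1 / 2 + Δ a) τ =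
      -Complex.exp (((0 : ℤ) : ℂ) * (2 * Real.pi * Complex.I) * Δ a) *
        θ₁ ((1 : ℂ) / 2 - 0 + Δ a) τ := by
    intro a
    have := h10 a
    rw [this]
    norm_num
  -- pair (τ/2, 0)
  have h20 : ∀ a : Fin 3, θ₁ (τ / 2 - 0 + Δ a) τ =
      -Complex.exp (((-1 : ℤ) : ℂ) * (2 * Real.pi * Complex.I) * Δ a) *
        θ₁ ((0 : ℂ) - τ / 2 + Δ a) τ := by
    intro a
    rw [show τ / 2 - 0 + Δ a = ((0 : ℂ) - τ / 2 + Δ a) + τ by ring, theta1_add_tau,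
      show -((Real.pi : ℂ) * Complex.I * τ) - 2 * Real.pi * Complex.I * ((0 : ℂ) - τ / 2 + Δ a)
        = ((-1 : ℤ) : ℂ) * (2 * Real.pi * Complex.I) * Δ a by push_cast; ring]
  have h02 : ∀ a : Fin 3, θ₁ ((0 : ℂ) - τ / 2 + Δ a) τ =
      -Complex.exp (((1 : ℤ) : ℂ) * (2 * Real.pi * Complex.I) * Δ a) *
        θ₁ (τ / 2 - 0 + Δ a) τ := by
    intro a
    have := rev_rel _ _ _ (h20 a)
    rw [this,
      show -(((-1 : ℤ) : ℂ) * (2 * Real.pi * Complex.I) * Δ a)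
        = ((1 : ℤ) : ℂ) * (2 * Real.pi * Complex.I) * Δ a by push_cast; ring]
  -- pair (τ/2, 1/2)
  have h21 : ∀ a : Fin 3, θ₁ (τ / 2 - 1 / 2 + Δ a) τ =
      -Complex.exp (((-1 : ℤ) : ℂ) * (2 * Real.pi * Complex.I) * Δ a) *
        θ₁ ((1 : ℂ) / 2 - τ / 2 + Δ a) τ := by
    intro a
    have step : θ₁ (((1 : ℂ) / 2 - τ / 2 + Δ a) + τ) τ =
        -Complex.exp (-((Real.pi : ℂ) * Complex.I * τ) -
          2 * Real.pi * Complex.I * ((1 : ℂ) / 2 - τ / 2 + Δ a)) *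
          θ₁ ((1 : ℂ) / 2 - τ / 2 + Δ a) τ := theta1_add_tau _ _
    have harg : ((1 : ℂ) / 2 - τ / 2 + Δ a) + τ = (τ / 2 - 1 / 2 + Δ a) + 1 := by ring
    rw [harg, theta1_add_one] at step
    have hE : Complex.exp (((-1 : ℤ) : ℂ) * (2 * Real.pi * Complex.I) * Δ a) =
        -Complex.exp (-((Real.pi : ℂ) * Complex.I * τ) -
          2 * Real.pi * Complex.I * ((1 : ℂ) / 2 - τ / 2 + Δ a)) := by
      rw [show (((-1 : ℤ) : ℂ) * (2 * Real.pi * Complex.I) * Δ a)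
          = (-((Real.pi : ℂ) * Complex.I * τ) -
            2 * Real.pi * Complex.I * ((1 : ℂ) / 2 - τ / 2 + Δ a)) + Real.pi * Complex.I by
          push_cast; ring]
      conv_lhs => rw [Complex.exp_add, Complex.exp_pi_mul_I]
      ring
    linear_combination -step + θ₁ ((1 : ℂ) / 2 - τ / 2 + Δ a) τ * hE
  have h12 : ∀ a : Fin 3, θ₁ ((1 : ℂ) / 2 - τ / 2 + Δ a) τ =
      -Complex.exp (((1 : ℤ) : ℂ) * (2 * Real.pi * Complex.I) * Δ a) *
        θ₁ (τ / 2 - 1 / 2 + Δ a) τ := by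
    intro a
    have := rev_rel _ _ _ (h21 a)
    rw [this,
      show -(((-1 : ℤ) : ℂ) * (2 * Real.pi * Complex.I) * Δ a)
        = ((1 : ℤ) : ℂ) * (2 * Real.pi * Complex.I) * Δ a by push_cast; ring]
  have hdiag : ∀ i : Fin 3, (∏ a : Fin 3,
      θ₁ ((![0, 1 / 2, τ / 2] : Fin 3 → ℂ) i - (![0, 1 / 2, τ / 2] : Fin 3 → ℂ) i + Δ a) τ /
        θ₁ ((![0, 1 / 2, τ / 2] : Fin 3 → ℂ) i - (![0, 1 / 2, τ / 2] : Fin 3 → ℂ) i + Δ a) τ)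
      = 1 := fun i => Finset.prod_eq_one fun a _ => div_self (hg i i a)
  have hoff : ∀ i j : Fin 3, ∀ s : ℤ,
      (∀ a : Fin 3, θ₁ ((![0, 1 / 2, τ / 2] : Fin 3 → ℂ) j -
          (![0, 1 / 2, τ / 2] : Fin 3 → ℂ) i + Δ a) τ =
        -Complex.exp ((s : ℂ) * (2 * Real.pi * Complex.I) * Δ a) *
          θ₁ ((![0, 1 / 2, τ / 2] : Fin 3 → ℂ) i - (![0, 1 / 2, τ / 2] : Fin 3 → ℂ) j + Δ a) τ) →
      (∏ a : Fin 3,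
        θ₁ ((![0, 1 / 2, τ / 2] : Fin 3 → ℂ) j - (![0, 1 / 2, τ / 2] : Fin 3 → ℂ) i + Δ a) τ /
          θ₁ ((![0, 1 / 2, τ / 2] : Fin 3 → ℂ) i - (![0, 1 / 2, τ / 2] : Fin 3 → ℂ) j + Δ a) τ)
        = -1 := fun i j s hrel => prod_ratio Δ n hn s _ _ hrel (fun a => hg i j a)
  have G0 : ∏ j : Fin 3, ∏ a : Fin 3,
      θ₁ ((![0, 1 / 2, τ / 2] : Fin 3 → ℂ) j - (![0, 1 / 2, τ / 2] : Fin 3 → ℂ) 0 + Δ a) τ /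
        θ₁ ((![0, 1 / 2, τ / 2] : Fin 3 → ℂ) 0 - (![0, 1 / 2, τ / 2] : Fin 3 → ℂ) j + Δ a) τ
      = 1 := by
    rw [Fin.prod_univ_three, hdiag 0,
      hoff 0 1 0 (fun a => by rw [hv0, hv1]; exact h10 a),
      hoff 0 2 (-1) (fun a => by rw [hv0, hv2]; exact h20 a)]
    norm_num
  have G1 : ∏ j : Fin 3, ∏ a : Fin 3,
      θ₁ ((![0, 1 / 2, τ / 2] : Fin 3 → ℂ) j - (![0, 1 / 2, τ / 2] : Fin 3 → ℂ) 1 + Δ a) τ /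
        θ₁ ((![0, 1 / 2, τ / 2] : Fin 3 → ℂ) 1 - (![0, 1 / 2, τ / 2] : Fin 3 → ℂ) j + Δ a) τ
      = 1 := by
    rw [Fin.prod_univ_three, hdiag 1,
      hoff 1 0 0 (fun a => by rw [hv0, hv1]; exact h01 a),
      hoff 1 2 (-1) (fun a => by rw [hv1, hv2]; exact h21 a)]
    norm_num
  have G2 : ∏ j : Fin 3, ∏ a : Fin 3,
      θ₁ ((![0, 1 / 2, τ / 2] : Fin 3 → ℂ) j - (![0, 1 / 2, τ / 2] : Fin 3 → ℂ) 2 + Δ a) τ /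
        θ₁ ((![0, 1 / 2, τ / 2] : Fin 3 → ℂ) 2 - (![0, 1 / 2, τ / 2] : Fin 3 → ℂ) j + Δ a) τ
      = 1 := by
    rw [Fin.prod_univ_three, hdiag 2,
      hoff 2 0 1 (fun a => by rw [hv0, hv2]; exact h02 a),
      hoff 2 1 1 (fun a => by rw [hv1, hv2]; exact h12 a)]
    norm_num
  intro i
  fin_cases i
  · exact G0
  · exact G1
  · exact G2
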